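/- arXiv:2412.10827 — 2 statements merged into one kernel-verified Lean document; each statement's English description precedes it below -/
import Mathlib

section
/- Let H(p) = −p·log p − (1−p)·log(1−p) (with 0·log 0 = 0), σ(z) = 1/(1 + exp(−z)), and fix r > 0 and φ₀ ∈ (0, π/2). Let α ∈ [φ₀ − π/2, 0] and define h(φ) = H(σ(r·cos(φ − α))) for φ ∈ [0, φ₀]. Then h is monotone nondecreasing on [0, φ₀]. Consequently, as φ decreases from φ₀ to 0, the entropy h(φ) decreases monotonically. -/
noncomputable def binEnt (p : ℝ) : ℝ := -(p * Real.log p) - (1 - p) * Real.log (1 - p)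

noncomputable def sigmoid (z : ℝ) : ℝ := 1 / (1 + Real.exp (-z))

lemma binEnt_eq (p : ℝ) : binEnt p = Real.binEntropy p := by
  simp [binEnt, Real.binEntropy, Real.log_inv]; ring

lemma sigmoid_mono : Monotone sigmoid := by
  intro a b hab
  unfold sigmoid
  have h1 : (0:ℝ) < 1 + Real.exp (-b) := by positivity
  gcongr

lemma sigmoid_mem {z : ℝ} (hz : 0 ≤ z) : sigmoid z ∈ Set.Icc (2⁻¹ : ℝ) 1 := by
  unfold sigmoid
  have he : Real.exp (-z) ≤ 1 := Real.exp_le_one_iff.2 (by linarith)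
  have hp : (0:ℝ) < Real.exp (-z) := Real.exp_pos _
  constructor
  · rw [le_div_iff₀ (by positivity)]
    linarith
  · rw [div_le_one (by positivity)]
    linarith

theorem entropy_case_ii (r φ₀ α : ℝ) (hr : 0 < r)
    (hφ₀ : φ₀ ∈ Set.Ioo 0 (Real.pi / 2))
    (hα : α ∈ Set.Icc (φ₀ - Real.pi / 2) 0) :
    MonotoneOn (fun φ : ℝ => binEnt (sigmoid (r * Real.cos (φ - α))))
      (Set.Icc 0 φ₀) := by
  obtain ⟨hφ₀0, hφ₀π⟩ := hφ₀
  obtain ⟨hα1, hα2⟩ := hα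
  intro x hx y hy hxy
  obtain ⟨hx0, hxφ⟩ := hx
  obtain ⟨hy0, hyφ⟩ := hy
  simp only
  -- angles in [0, π/2]
  have hrange : ∀ t ∈ Set.Icc (0:ℝ) φ₀, 0 ≤ t - α ∧ t - α ≤ Real.pi / 2 := by
    rintro t ⟨ht0, htφ⟩
    constructor <;> linarith
  obtain ⟨hx1, hx2⟩ := hrange x ⟨hx0, hxφ⟩
  obtain ⟨hy1, hy2⟩ := hrange y ⟨hy0, hyφ⟩
  have hpi : Real.pi / 2 ≤ Real.pi := by linarith [Real.pi_pos]
  have hcos : Real.cos (y - α) ≤ Real.cos (x - α) :=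
    Real.cos_le_cos_of_nonneg_of_le_pi hx1 (hy2.trans hpi) (by linarith)
  have hcx : 0 ≤ Real.cos (x - α) := Real.cos_nonneg_of_mem_Icc ⟨by linarith, hx2⟩
  have hcy : 0 ≤ Real.cos (y - α) := Real.cos_nonneg_of_mem_Icc ⟨by linarith, hy2⟩
  have hz : r * Real.cos (y - α) ≤ r * Real.cos (x - α) := by nlinarith
  rw [binEnt_eq, binEnt_eq]
  exact Real.binEntropy_strictAntiOn.antitoneOn
    (sigmoid_mem (by positivity)) (sigmoid_mem (by positivity)) (sigmoid_mono hz)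
end

section
/- Let H(p) = −p·log p − (1−p)·log(1−p) (with 0·log 0 = 0), σ(z) = 1/(1 + exp(−z)), and fix r > 0 and φ₀ ∈ (0, π/2). Let α ∈ [φ₀ − π, −π/2] and define h(φ) = H(σ(r·cos(φ − α))) for φ ∈ [0, φ₀]. Then h is monotone nonincreasing on [0, φ₀]. Consequently, as φ decreases from φ₀ to 0, the entropy h(φ) increases monotonically. -/
lemma sigmoid_pos (z : ℝ) : 0 < sigmoid z := by
  have := Real.exp_pos (-z)
  unfold sigmoid
  positivity

lemma sigmoid_le_half {z : ℝ} (hz : z ≤ 0) : sigmoid z ≤ 1 / 2 := by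
  have h1 : (1 : ℝ) ≤ Real.exp (-z) := Real.one_le_exp (by linarith)
  have h2 : (0 : ℝ) < 1 + Real.exp (-z) := by linarith
  rw [sigmoid, div_le_div_iff₀ h2 (by norm_num)]
  linarith

theorem entropy_case_iv (r φ₀ α : ℝ) (hr : 0 < r)
    (hφ₀ : φ₀ ∈ Set.Ioo 0 (Real.pi / 2))
    (hα : α ∈ Set.Icc (φ₀ - Real.pi) (-(Real.pi / 2))) :
    AntitoneOn (fun φ : ℝ => binEnt (sigmoid (r * Real.cos (φ - α))))
      (Set.Icc 0 φ₀) := by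
  obtain ⟨hφ₀0, hφ₀π⟩ := hφ₀
  obtain ⟨hα1, hα2⟩ := hα
  intro x hx y hy hxy
  obtain ⟨hx0, hxφ⟩ := hx
  obtain ⟨hy0, hyφ⟩ := hy
  -- x - α, y - α ∈ [π/2, π]
  have hrange : ∀ φ, 0 ≤ φ → φ ≤ φ₀ → Real.pi / 2 ≤ φ - α ∧ φ - α ≤ Real.pi := by
    intro φ h0 h1
    constructor <;> linarith
  have hxr := hrange x hx0 hxφ
  have hyr := hrange y hy0 hyφ
  -- cos antitone on [0, π]
  have hcos : Real.cos (y - α) ≤ Real.cos (x - α) := by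
    apply Real.cos_le_cos_of_nonneg_of_le_pi (by linarith [hxr.1, Real.pi_pos]) hyr.2
    linarith
  have hcosx_nonpos : Real.cos (x - α) ≤ 0 := by
    rcases hxr with ⟨h1, h2⟩
    exact Real.cos_nonpos_of_pi_div_two_le_of_le h1 (by linarith [Real.pi_pos])
  have hcosy_nonpos : Real.cos (y - α) ≤ 0 := le_trans hcos hcosx_nonpos
  -- z values
  set zx := r * Real.cos (x - α) with hzx
  set zy := r * Real.cos (y - α) with hzy
  have hz_le : zy ≤ zx := by
    apply mul_le_mul_of_nonneg_left hcos hr.le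
  have hzx0 : zx ≤ 0 := mul_nonpos_of_nonneg_of_nonpos hr.le hcosx_nonpos
  have hzy0 : zy ≤ 0 := mul_nonpos_of_nonneg_of_nonpos hr.le hcosy_nonpos
  -- sigmoid values in (0, 1/2]
  have hs_le : sigmoid zy ≤ sigmoid zx := sigmoid_mono hz_le
  have hsx : sigmoid zx ∈ Set.Icc (0 : ℝ) 2⁻¹ :=
    ⟨(sigmoid_pos zx).le, by simpa [one_div] using sigmoid_le_half hzx0⟩
  have hsy : sigmoid zy ∈ Set.Icc (0 : ℝ) 2⁻¹ :=
    ⟨(sigmoid_pos zy).le, by simpa [one_div] using sigmoid_le_half hzy0⟩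
  simp only [binEnt_eq]
  exact Real.binEntropy_strictMonoOn.monotoneOn hsy hsx hs_le
end
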